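/- For every finitely supported real sequence u with u_0 = u_1 = 0, the improved second-order inequality ∑_{n≥1} (Δu_n)² ≥ ∑_{n≥2} ( 9/(16 n⁴) + 15/(16 n⁵) ) u_n² holds, where Δu_n = 2u_n − u_{n+1} − u_{n-1}. -/

import Mathlib

/-!
For `a > 0`, `(x - y)² - (1 - a) x² - (1 - a⁻¹) y² = (a x - y)² / a ≥ 0`. Applying this to
`x = v (n+1)`, `y = v n` with weight `w n` and summing by parts turns `∑ w n (v (n+1) - v n)²`
into a lower bound `∑ (w n (1 - a n) + w (n+1) (1 - (a (n+1))⁻¹)) v (n+1)²`, sharp when `a n`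
is the ratio `v n / v (n+1)` of a ground state. Done once for the differences `u (n+1) - u n`
(ground state `√n`) and once for `u` itself against the resulting weight `≈ 1/(4n²)` (ground
state `n^(3/2)`), this bounds `∑ (Δu)²` below by `∑ μ n u n²`. Taking rational approximations of
the ground-state ratios makes every weight rational, and `μ n ≥ 9/(16n⁴) + 15/(16n⁵)` becomes
the positivity of a quartic polynomial.
-/

open Finset

lemma one_sub_mul_sq_add_one_sub_inv_mul_sq_le_sq_sub {a : ℝ} (ha : 0 < a) (x y : ℝ) :
    (1 - a) * x ^ 2 + (1 - a⁻¹) * y ^ 2 ≤ (x - y) ^ 2 := by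
  have key : (x - y) ^ 2 - ((1 - a) * x ^ 2 + (1 - a⁻¹) * y ^ 2) = (a * x - y) ^ 2 / a := by
    field_simp
    ring
  linarith [div_nonneg (sq_nonneg (a * x - y)) ha.le]

lemma sum_range_mul_succ_add_mul (p q f : ℕ → ℝ) (M : ℕ) :
    ∑ n ∈ range M, (p n * f (n + 1) + q n * f n) =
      ∑ n ∈ range M, (p n + q (n + 1)) * f (n + 1) + q 0 * f 0 - q M * f M := by
  induction M with
  | zero => simp
  | succ M ih => rw [sum_range_succ, ih, sum_range_succ]; ring

section WeightedHardy

variable {w a c v : ℕ → ℝ}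

lemma sum_range_mul_sq_le_of_le_weight (hw : ∀ n, 0 ≤ w n) (ha : ∀ n, 0 < a n)
    (hc : ∀ n, c n ≤ w n * (1 - a n) + w (n + 1) * (1 - (a (n + 1))⁻¹))
    {M : ℕ} (h0 : v 0 = 0) (hM : v M = 0) :
    ∑ n ∈ range M, c n * v (n + 1) ^ 2 ≤ ∑ n ∈ range M, w n * (v (n + 1) - v n) ^ 2 := by
  calc ∑ n ∈ range M, c n * v (n + 1) ^ 2
      ≤ ∑ n ∈ range M, (w n * (1 - a n) + w (n + 1) * (1 - (a (n + 1))⁻¹)) * v (n + 1) ^ 2 :=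
        sum_le_sum fun n _ => mul_le_mul_of_nonneg_right (hc n) (sq_nonneg _)
    _ = ∑ n ∈ range M, (w n * (1 - a n) * v (n + 1) ^ 2 + w n * (1 - (a n)⁻¹) * v n ^ 2) := by
        rw [sum_range_mul_succ_add_mul (fun n => w n * (1 - a n))
          (fun n => w n * (1 - (a n)⁻¹)) (fun n => v n ^ 2)]
        simp [h0, hM]
    _ ≤ ∑ n ∈ range M, w n * (v (n + 1) - v n) ^ 2 := sum_le_sum fun n _ => by
        rw [mul_assoc, mul_assoc, ← mul_add]
        exact mul_le_mul_of_nonneg_left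
          (one_sub_mul_sq_add_one_sub_inv_mul_sq_le_sq_sub (ha n) _ _) (hw n)

lemma tsum_mul_sq_le_of_le_weight (hw : ∀ n, 0 ≤ w n) (ha : ∀ n, 0 < a n)
    (hc : ∀ n, c n ≤ w n * (1 - a n) + w (n + 1) * (1 - (a (n + 1))⁻¹))
    (hv : ∃ N, ∀ n ≥ N, v n = 0) (h0 : v 0 = 0) :
    ∑' n, c n * v (n + 1) ^ 2 ≤ ∑' n, w n * (v (n + 1) - v n) ^ 2 := by
  obtain ⟨N, hN⟩ := hv
  have hvanish : ∀ n ∉ range N, v n = 0 ∧ v (n + 1) = 0 := fun n hn => by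
    rw [mem_range, not_lt] at hn
    exact ⟨hN n hn, hN (n + 1) (by omega)⟩
  rw [tsum_eq_sum fun n hn => by simp [(hvanish n hn).2],
    tsum_eq_sum fun n hn => by simp [(hvanish n hn).1, (hvanish n hn).2]]
  exact sum_range_mul_sq_le_of_le_weight hw ha hc h0 (hN N le_rfl)

end WeightedHardy

-- Rational approximations of the ground-state ratios `v n / v (n+1)` of the two steps:
-- `diffRatio n ≈ √((2n+1)/(2n+3))` for `v n = u (n+1) - u n ≈ √(n + 1/2)`, and
-- `valueRatio n ≈ ((n+1)/(n+2))^(3/2)` for `v n = u (n+1) = (n+1)^(3/2)`.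
noncomputable def diffRatio (n : ℕ) : ℝ := (4 * n + 1) / (4 * n + 3)

noncomputable def valueRatio (n : ℕ) : ℝ := (4 * n + 3) / (4 * n + 9)

noncomputable def hardyWeight (n : ℕ) : ℝ := 4 / ((4 * n + 3) * (4 * n + 5))

lemma diffRatio_pos (n : ℕ) : 0 < diffRatio n := by unfold diffRatio; positivity

lemma valueRatio_pos (n : ℕ) : 0 < valueRatio n := by unfold valueRatio; positivity

lemma hardyWeight_nonneg (n : ℕ) : 0 ≤ hardyWeight n := by unfold hardyWeight; positivity

lemma hardyWeight_eq (n : ℕ) :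
    hardyWeight n = 1 - diffRatio n + (1 - (diffRatio (n + 1))⁻¹) := by
  unfold hardyWeight diffRatio
  push_cast
  field_simp
  ring

lemma rellich_weight_le (n : ℕ) :
    9 / (16 * ((n : ℝ) + 2) ^ 4) + 15 / (16 * ((n : ℝ) + 2) ^ 5) ≤
      hardyWeight n * (1 - valueRatio n) +
        hardyWeight (n + 1) * (1 - (valueRatio (n + 1))⁻¹) := by
  have key : hardyWeight n * (1 - valueRatio n) +
        hardyWeight (n + 1) * (1 - (valueRatio (n + 1))⁻¹) -
        (9 / (16 * ((n : ℝ) + 2) ^ 4) + 15 / (16 * ((n : ℝ) + 2) ^ 5)) =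
      (21888 * (n + 2) ^ 4 - 20256 * (n + 2) ^ 3 + 2268 * (n + 2) ^ 2 + 1245 * (n + 2) - 225) /
        (16 * (n + 2) ^ 5 * ((4 * n + 3) * (4 * n + 5) * (4 * n + 9) * (4 * n + 7) ^ 2)) := by
    unfold hardyWeight valueRatio
    push_cast
    field_simp
    ring
  have hx : (2 : ℝ) ≤ n + 2 := by simp
  rw [← sub_nonneg, key]
  apply div_nonneg _ (by positivity)
  nlinarith [pow_le_pow_left₀ zero_le_two hx 3]

/-- Improved second order discrete Rellich inequality:
`∑_{n≥1} (Δu_n)² ≥ ∑_{n≥2} (9/(16n⁴) + 15/(16n⁵)) u_n²`. -/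
theorem discrete_rellich_improved (u : ℕ → ℝ) (hfin : ∃ N, ∀ n ≥ N, u n = 0)
    (h0 : u 0 = 0) (h1 : u 1 = 0) :
    ∑' n : ℕ, (2 * u (n + 1) - u (n + 2) - u n) ^ 2 ≥
      ∑' n : ℕ,
        (9 / (16 * ((n : ℝ) + 2) ^ 4) + 15 / (16 * ((n : ℝ) + 2) ^ 5)) * (u (n + 2)) ^ 2 := by
  obtain ⟨N, hN⟩ := hfin
  have hardy := tsum_mul_sq_le_of_le_weight (v := fun n => u (n + 1)) hardyWeight_nonneg
    valueRatio_pos rellich_weight_le ⟨N, fun n hn => hN _ (by omega)⟩ h1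
  have rellich := tsum_mul_sq_le_of_le_weight (w := 1) (c := hardyWeight)
    (v := fun n => u (n + 1) - u n) (fun _ => zero_le_one) diffRatio_pos
    (fun n => by simp [hardyWeight_eq]) ⟨N, fun n hn => by simp [hN n hn, hN (n + 1) (by omega)]⟩
    (by simp [h0, h1])
  refine hardy.trans (rellich.trans_eq (tsum_congr fun n => ?_))
  simp only [Pi.one_apply, one_mul]
  ring
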